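/- With the setup of a consistent local distribution μ on {0,1}² matching vector inner products (⟨v_{ia}, v_{jb}⟩ = P(x_i = a, x_j = b), v_{i0}+v_{i1} = I, ⟨v_{i0},v_{i1}⟩ = 0, analogously for j, ‖I‖=1), let w_i = 2(v_{i0} − ⟨v_{i0}, I⟩ I) and w_j = 2(v_{j0} − ⟨v_{j0}, I⟩ I) be (twice) the components orthogonal to I. Then |⟨w_i, w_j⟩| = 4 |P(x_i = 0, x_j = 0) − P(x_i = 0) P(x_j = 0)|, and hence |⟨w_i, w_j⟩| ≤ 4√(2 I(x_i; x_j)). -/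
import Mathlib

open scoped RealInnerProductSpace

/-- mutual information (base-2 log) of a distribution `μ` on `{0,1}²`
(`false` encodes 0, `true` encodes 1) -/
noncomputable def miOfDist (μ : Bool × Bool → ℝ) : ℝ :=
  ∑ a : Bool, ∑ b : Bool,
    μ (a, b) * Real.logb 2 (μ (a, b) /
      ((μ (a, false) + μ (a, true)) * (μ (false, b) + μ (true, b))))

lemma key_term (x y : ℝ) (hx : 0 ≤ x) (hy : 0 < y) :
    x - y + (x - y)^2 / (2*(x+y)) ≤ x * Real.log (x / y) := by
  rcases hx.eq_or_lt with h | hx'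
  · subst h
    have : (0 - y)^2 / (2*(0+y)) = y / 2 := by
      rw [zero_sub, neg_sq, zero_add]
      field_simp
    rw [this]
    simp
    linarith
  · set s := Real.sqrt (y / x) with hsdef
    have hyx : (0:ℝ) < y / x := by positivity
    have hs0 : 0 < s := Real.sqrt_pos.mpr hyx
    have hs2 : s ^ 2 = y / x := Real.sq_sqrt hyx.le
    have hsx : x * s ^ 2 = y := by
      rw [hs2]; field_simp
    have hlog : Real.log (y / x) ≤ 2 * s - 2 := by
      have h1 : Real.log s ≤ s - 1 := Real.log_le_sub_one_of_pos hs0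
      have h2 : Real.log (y / x) = 2 * Real.log s := by
        rw [← hs2, Real.log_pow]; push_cast; ring
      linarith
    have hlxy : Real.log (x / y) = - Real.log (y / x) := by
      rw [← Real.log_inv, inv_div]
    have hxy2 : (0:ℝ) < 2 * (x + y) := by positivity
    have key2 : (x - y)^2 / (2*(x+y)) ≤ x * (2 - 2*s) - (x - y) := by
      rw [div_le_iff₀ hxy2, ← hsx]
      nlinarith [sq_nonneg (x*(s-1)^2), sq_nonneg (s-1), hx'.le, hs0.le,
        mul_nonneg hx'.le (sq_nonneg ((s-1)^2))]
    have hxl : x * (2 - 2*s) ≤ x * Real.log (x / y) := by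
      rw [hlxy]
      have := mul_le_mul_of_nonneg_left hlog hx'.le
      linarith
    linarith

set_option maxHeartbeats 1000000 in
lemma pinsker4 (a b c d : ℝ) (ha : 0 ≤ a) (hb : 0 ≤ b) (hc : 0 ≤ c) (hd : 0 ≤ d)
    (hs : a + b + c + d = 1) :
    |a - (a+b)*(a+c)| ≤ Real.sqrt (2 *
      (a * Real.logb 2 (a / ((a+b)*(a+c))) + b * Real.logb 2 (b / ((a+b)*(b+d))) +
       c * Real.logb 2 (c / ((c+d)*(a+c))) + d * Real.logb 2 (d / ((c+d)*(b+d))))) := by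
  set δ := a - (a+b)*(a+c) with hδdef
  by_cases hδ : δ = 0
  · rw [hδ]; simpa using Real.sqrt_nonneg _
  -- positivity of all marginals
  have hab : 0 < a + b := by
    rcases lt_or_eq_of_le (by linarith : (0:ℝ) ≤ a + b) with h | h
    · exact h
    · exfalso; apply hδ; have ha0 : a = 0 := by linarith
      have hb0 : b = 0 := by linarith
      simp [hδdef, ha0, hb0]
  have hcd : 0 < c + d := by
    rcases lt_or_eq_of_le (by linarith : (0:ℝ) ≤ c + d) with h | h
    · exact h
    · exfalso; apply hδ
      have hc0 : c = 0 := by linarith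
      have hd0 : d = 0 := by linarith
      rw [hδdef]; nlinarith
  have hac : 0 < a + c := by
    rcases lt_or_eq_of_le (by linarith : (0:ℝ) ≤ a + c) with h | h
    · exact h
    · exfalso; apply hδ; have ha0 : a = 0 := by linarith
      have hc0 : c = 0 := by linarith
      simp [hδdef, ha0, hc0]
  have hbd : 0 < b + d := by
    rcases lt_or_eq_of_le (by linarith : (0:ℝ) ≤ b + d) with h | h
    · exact h
    · exfalso; apply hδ
      have hb0 : b = 0 := by linarith
      have hd0 : d = 0 := by linarith
      rw [hδdef]; nlinarith
  have h1 : 0 < (a+b)*(a+c) := mul_pos hab hac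
  have h2 : 0 < (a+b)*(b+d) := mul_pos hab hbd
  have h3 : 0 < (c+d)*(a+c) := mul_pos hcd hac
  have h4 : 0 < (c+d)*(b+d) := mul_pos hcd hbd
  -- difference identities
  have e2 : b - (a+b)*(b+d) = -δ := by rw [hδdef]; linear_combination (-(a+b)) * hs
  have e3 : c - (c+d)*(a+c) = -δ := by rw [hδdef]; linear_combination (-(a+c)) * hs
  have e4 : d - (c+d)*(b+d) = δ := by rw [hδdef]; linear_combination (a-d) * hs
  -- per-term lower bounds
  have k1 := key_term a ((a+b)*(a+c)) ha h1
  have k2 := key_term b ((a+b)*(b+d)) hb h2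
  have k3 := key_term c ((c+d)*(a+c)) hc h3
  have k4 := key_term d ((c+d)*(b+d)) hd h4
  have bound : ∀ x y : ℝ, 0 ≤ x → 0 < y → x - y = δ ∨ x - y = -δ → x + y ≤ 2 →
      x - y + δ^2/4 ≤ x * Real.log (x/y) := by
    intro x y hx hy hxy hxy2
    have hsq : (x - y)^2 = δ^2 := by rcases hxy with h | h <;> rw [h]; ring
    have hdd : δ^2/4 ≤ (x - y)^2 / (2*(x+y)) := by
      rw [hsq]
      apply div_le_div_of_nonneg_left (sq_nonneg δ) (by linarith)
      linarith
    have := key_term x y hx hy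
    linarith
  have hm1 : a + b ≤ 1 := by linarith
  have hm2 : a + c ≤ 1 := by linarith
  have hm3 : c + d ≤ 1 := by linarith
  have hm4 : b + d ≤ 1 := by linarith
  have hp1 : (a+b)*(a+c) ≤ 1 := mul_le_one₀ hm1 hac.le hm2
  have hp2 : (a+b)*(b+d) ≤ 1 := mul_le_one₀ hm1 hbd.le hm4
  have hp3 : (c+d)*(a+c) ≤ 1 := mul_le_one₀ hm3 hac.le hm2
  have hp4 : (c+d)*(b+d) ≤ 1 := mul_le_one₀ hm3 hbd.le hm4
  have hB1 := bound a ((a+b)*(a+c)) ha h1 (Or.inl hδdef.symm) (by linarith)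
  have hB2 := bound b ((a+b)*(b+d)) hb h2 (Or.inr e2) (by linarith)
  have hB3 := bound c ((c+d)*(a+c)) hc h3 (Or.inr e3) (by linarith)
  have hB4 := bound d ((c+d)*(b+d)) hd h4 (Or.inl e4) (by linarith)
  -- sum of second marginals of product distribution is 1
  have hν : (a+b)*(a+c) + (a+b)*(b+d) + (c+d)*(a+c) + (c+d)*(b+d) = 1 := by nlinarith
  set S := a * Real.log (a / ((a+b)*(a+c))) + b * Real.log (b / ((a+b)*(b+d))) +
       c * Real.log (c / ((c+d)*(a+c))) + d * Real.log (d / ((c+d)*(b+d))) with hSdef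
  have hDS : δ^2 ≤ S := by rw [hSdef]; linarith
  have hlog2 : 0 < Real.log 2 := Real.log_pos (by norm_num)
  have hlog2' : Real.log 2 < 1 := by
    have := Real.log_two_lt_d9; linarith
  have hI : a * Real.logb 2 (a / ((a+b)*(a+c))) + b * Real.logb 2 (b / ((a+b)*(b+d))) +
       c * Real.logb 2 (c / ((c+d)*(a+c))) + d * Real.logb 2 (d / ((c+d)*(b+d))) = S / Real.log 2 := by
    rw [hSdef]; simp only [Real.logb]; ring
  rw [hI]
  have hS0 : 0 ≤ S := le_trans (sq_nonneg δ) hDS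
  have hfinal : δ^2 ≤ 2 * (S / Real.log 2) := by
    have hq : S ≤ S / Real.log 2 := by
      rw [le_div_iff₀ hlog2]
      calc S * Real.log 2 ≤ S * 1 := mul_le_mul_of_nonneg_left hlog2'.le hS0
        _ = S := mul_one S
    have h5 : 0 ≤ S / Real.log 2 := div_nonneg hS0 hlog2.le
    linarith
  calc |δ| ≤ Real.sqrt (δ^2) := by rw [Real.sqrt_sq_eq_abs]
    _ ≤ Real.sqrt (2 * (S / Real.log 2)) := Real.sqrt_le_sqrt hfinal

/-- with `w_i, w_j` (twice) the components of `v_{i0}, v_{j0}` orthogonal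
to `I`, `|⟨w_i,w_j⟩| = 4|P(x_i=0,x_j=0) − P(x_i=0)P(x_j=0)|`, hence
`|⟨w_i,w_j⟩| ≤ 4√(2 I(x_i;x_j))`. -/
theorem inner_w_eq_and_le
    {E : Type*} [NormedAddCommGroup E] [InnerProductSpace ℝ E]
    (vI : E) (hI : ‖vI‖ = 1) (vi vj : Bool → E)
    (hisum : vi false + vi true = vI) (hiorth : ⟪vi false, vi true⟫ = 0)
    (hjsum : vj false + vj true = vI) (hjorth : ⟪vj false, vj true⟫ = 0)
    (μ : Bool × Bool → ℝ) (hμ0 : ∀ ab, 0 ≤ μ ab) (hμ1 : ∑ ab : Bool × Bool, μ ab = 1)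
    (hjoint : ∀ a b, ⟪vi a, vj b⟫ = μ (a, b))
    (hmargi : ∀ a, ⟪vi a, vI⟫ = μ (a, false) + μ (a, true))
    (hmargj : ∀ b, ⟪vj b, vI⟫ = μ (false, b) + μ (true, b))
    (wi wj : E)
    (hwi : wi = (2 : ℝ) • (vi false - ⟪vi false, vI⟫ • vI))
    (hwj : wj = (2 : ℝ) • (vj false - ⟪vj false, vI⟫ • vI)) :
    |⟪wi, wj⟫| = 4 * |μ (false, false) -
        (μ (false, false) + μ (false, true)) * (μ (false, false) + μ (true, false))| ∧
      |⟪wi, wj⟫| ≤ 4 * Real.sqrt (2 * miOfDist μ) := by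
  have hII : ⟪vI, vI⟫ = 1 := by
    rw [real_inner_self_eq_norm_sq, hI]; norm_num
  have hIvj : ⟪vI, vj false⟫ = ⟪vj false, vI⟫ := real_inner_comm _ _
  have hexp : ⟪wi, wj⟫ = 4 * (μ (false, false) -
      (μ (false, false) + μ (false, true)) * (μ (false, false) + μ (true, false))) := by
    rw [hwi, hwj]
    simp only [inner_sub_left, inner_sub_right, real_inner_smul_left, real_inner_smul_right,
      smul_smul, inner_smul_left, inner_smul_right, RCLike.ofReal_real_eq_id, id, conj_trivial,
      hII, hIvj, hjoint, hmargi, hmargj]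
    ring
  have habs : |⟪wi, wj⟫| = 4 * |μ (false, false) -
      (μ (false, false) + μ (false, true)) * (μ (false, false) + μ (true, false))| := by
    rw [hexp, abs_mul, abs_of_nonneg (by norm_num : (0:ℝ) ≤ 4)]
  refine ⟨habs, ?_⟩
  rw [habs]
  have hsum4 : μ (false, false) + μ (false, true) + μ (true, false) + μ (true, true) = 1 := by
    rw [← hμ1, Fintype.sum_prod_type]
    simp [Fintype.sum_bool]
    ring
  have hmi : miOfDist μ =
      μ (false, false) * Real.logb 2 (μ (false, false) /
        ((μ (false, false) + μ (false, true)) * (μ (false, false) + μ (true, false)))) +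
      μ (false, true) * Real.logb 2 (μ (false, true) /
        ((μ (false, false) + μ (false, true)) * (μ (false, true) + μ (true, true)))) +
      μ (true, false) * Real.logb 2 (μ (true, false) /
        ((μ (true, false) + μ (true, true)) * (μ (false, false) + μ (true, false)))) +
      μ (true, true) * Real.logb 2 (μ (true, true) /
        ((μ (true, false) + μ (true, true)) * (μ (false, true) + μ (true, true)))) := by
    rw [miOfDist]
    simp [Fintype.sum_bool]
    ring
  have hp := pinsker4 (μ (false, false)) (μ (false, true)) (μ (true, false)) (μ (true, true))
    (hμ0 _) (hμ0 _) (hμ0 _) (hμ0 _) hsum4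
  rw [hmi]
  have h4 : (0:ℝ) ≤ 4 := by norm_num
  calc 4 * |μ (false, false) -
        (μ (false, false) + μ (false, true)) * (μ (false, false) + μ (true, false))|
      ≤ 4 * Real.sqrt (2 * (μ (false, false) * Real.logb 2 (μ (false, false) /
          ((μ (false, false) + μ (false, true)) * (μ (false, false) + μ (true, false)))) +
        μ (false, true) * Real.logb 2 (μ (false, true) /
          ((μ (false, false) + μ (false, true)) * (μ (false, true) + μ (true, true)))) +
        μ (true, false) * Real.logb 2 (μ (true, false) /
          ((μ (true, false) + μ (true, true)) * (μ (false, false) + μ (true, false)))) +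
        μ (true, true) * Real.logb 2 (μ (true, true) /
          ((μ (true, false) + μ (true, true)) * (μ (false, true) + μ (true, true)))))) := by
        exact mul_le_mul_of_nonneg_left hp h4
    _ = _ := by ring_nf
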